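/- arXiv:math/0312178 — 3 statements merged into one kernel-verified Lean document; each statement's English description precedes it below -/
import Mathlib

section
/- Let p be an odd prime and let a, q, n be nonnegative integers. For each r, the rational number ((r+q)p+n)! / ((r+q)! · p^{r+q}) is an integer, and p^M divides the integer Σ_{r=0}^{a} C(a,r) · ((r+q)p+n)! / ((r+q)! · p^{r+q}), where M = ord_p(n!) if n ≥ ap, and M = a − ⌊n/p⌋ + ord_p(n!) − ⌊(a − ⌊n/p⌋)/p⌋ if n < ap. -/
/-!
Write `n = c p + d` with `d < p` and let `W m` (`prodNonMultiples p n m`) be the product of the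
integers in `(n, n + m p]` prime to `p`. Splitting off the multiples of `p` gives
`(m p + n)! = n! C(m + c, c) W(m) m! p^m`. For `n < a p` the exponent is `ord_p(n!) + g(a - c)`
with `g A = A - ⌊A/p⌋` (`nonMultipleCount p A`), and by Vandermonde's identity it suffices to
show `p ^ g A ∣ ∑_s C(A, s) W(s + q)` for all `A` and `q`.

Now `W (m + 1) = W m · F m` for `F x = ∏_t (p x + n + 1 + t)`. As the `n + 1 + t` run over the
nonzero residues mod `p`, `∏_t (X + n + 1 + t) ≡ X^(p-1) - 1 (mod p)`; so `deg F < p` and the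
`k`-th coefficient of `F + 1` is divisible by `p ^ min (k + 1) (p - 1)`. By Pascal's rule,
`∑_s C(A + 1, s) W(s + q) U(s + q) = ∑_s C(A, s) W(s + q) U'(s + q)` with
`U' = U + F · U(X + 1)`. If `p ^ (t - g (A + 1 - k))` divides the `k`-th coefficient of `U` for
all `k`, then `p ^ (t - g (A - k))` divides that of `U'`, because `j + 1 ≤ p` consecutive integers
contain at most `min (j + 1) (p - 1)` non-multiples of `p`. Starting from `U = 1` and `t = g A`
and descending to `A = 0` gives the claim.
-/

open Nat Polynomial Finset

namespace Polynomial

variable {R : Type*} [CommRing R]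

theorem dvd_taylor_coeff_sub_coeff {x : R} {Q : R[X]} (r : R) {j : ℕ}
    (h : ∀ i, j < i → x ∣ Q.coeff i) : x ∣ (taylor r Q).coeff j - Q.coeff j := by
  rw [taylor_coeff, eval_eq_sum_range, sum_range_succ', hasseDeriv_coeff]
  simp only [zero_add, choose_self, cast_one, one_mul, pow_zero, mul_one,
    add_sub_cancel_right]
  refine dvd_sum fun i _ => ?_
  rw [hasseDeriv_coeff]
  exact ((h (i + 1 + j) (by omega)).mul_left _).mul_right _

theorem dvd_taylor_coeff {x : R} {Q : R[X]} (r : R) {j : ℕ}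
    (h : ∀ i, j ≤ i → x ∣ Q.coeff i) : x ∣ (taylor r Q).coeff j := by
  simpa using dvd_add (dvd_taylor_coeff_sub_coeff r fun i hi => h i hi.le) (h j le_rfl)

theorem coeff_comp_C_mul_X (f : R[X]) (a : R) (k : ℕ) :
    (f.comp (C a * X)).coeff k = a ^ k * f.coeff k := by
  induction f using Polynomial.induction_on' with
  | add f g hf hg => simp [hf, hg, mul_add]
  | monomial n c =>
    rw [← C_mul_X_pow_eq_monomial, mul_comp, C_comp, X_pow_comp, mul_pow, ← C_pow,
      ← mul_assoc, ← C_mul, coeff_C_mul_X_pow, coeff_C_mul_X_pow]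
    split_ifs with h
    · subst h; ring
    · simp

end Polynomial

theorem FiniteField.prod_X_sub_C_eq_X_pow_card_sub_X (K : Type*) [Field K] [Fintype K] :
    ∏ u : K, (X - C u) = X ^ Fintype.card K - X := by
  have hcard : 1 < Fintype.card K := Fintype.one_lt_card
  have hmonic : (X ^ Fintype.card K - X : K[X]).Monic :=
    monic_X_pow_sub (by rw [degree_X]; exact_mod_cast hcard)
  have hroots := roots_X_pow_card_sub_X K
  rw [← prod_multiset_X_sub_C_of_monic_of_roots_card_eq hmonic
    (by rw [hroots, X_pow_card_sub_X_natDegree_eq K hcard]; rfl), hroots]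
  rfl

theorem ZMod.prod_range_natCast_add {M : Type*} [CommMonoid M] (p : ℕ) [NeZero p] (a : ℕ)
    (h : ZMod p → M) : ∏ t ∈ range p, h ((a + t : ℕ) : ZMod p) = ∏ u, h u := by
  refine prod_nbij' (fun t => ((a + t : ℕ) : ZMod p)) (fun u => (u - (a : ZMod p)).val)
    (by simp) (fun u _ => by simpa using ZMod.val_lt (u - (a : ZMod p))) (fun t ht => ?_)
    (fun u _ => by simp) (fun _ _ => rfl)
  rw [mem_range] at ht
  simp [ZMod.val_natCast, Nat.mod_eq_of_lt ht]

theorem Nat.sum_range_choose_mul_choose_mul (f : ℕ → ℕ) (a i : ℕ) :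
    ∑ r ∈ range (a + 1), a.choose r * r.choose i * f r
      = a.choose i * ∑ s ∈ range (a - i + 1), (a - i).choose s * f (s + i) := by
  rcases le_or_gt i a with hia | hia
  · rw [show a + 1 = i + (a - i + 1) by omega, sum_range_add, mul_sum,
      sum_eq_zero fun r hr => by rw [choose_eq_zero_of_lt (mem_range.1 hr), mul_zero, zero_mul],
      zero_add]
    refine sum_congr rfl fun s _ => ?_
    rw [choose_mul (Nat.le_add_right i s), Nat.add_sub_cancel_left, add_comm s i]
    ring
  · rw [choose_eq_zero_of_lt hia, zero_mul]
    exact sum_eq_zero fun r hr => by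
      rw [choose_eq_zero_of_lt (by rw [mem_range] at hr; omega : r < i), mul_zero, zero_mul]

namespace FactorialQuotient

def nonMultipleCount (p A : ℕ) : ℕ := A - A / p

theorem nonMultipleCount_mono (p : ℕ) : Monotone (nonMultipleCount p) := by
  refine monotone_nat_of_le_succ fun y => ?_
  have hy : y / p ≤ y := Nat.div_le_self y p
  have hsucc : (y + 1) / p ≤ y / p + 1 := by
    rcases Nat.eq_zero_or_pos p with rfl | hp
    · simp
    · exact (Nat.div_le_div_right (by omega)).trans (Nat.add_div_right y hp).le
  unfold nonMultipleCount
  omega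

theorem nonMultipleCount_le_min_add {p s : ℕ} (hs : s ≤ p) (y : ℕ) :
    nonMultipleCount p y ≤ min s (p - 1) + nonMultipleCount p (y - s) := by
  unfold nonMultipleCount
  have ha : y / p ≤ y := Nat.div_le_self y p
  have hb : (y - s) / p ≤ y - s := Nat.div_le_self _ p
  have hab : (y - s) / p ≤ y / p := Nat.div_le_div_right (Nat.sub_le y s)
  rcases lt_or_ge y s with hys | hsy
  · rw [Nat.sub_eq_zero_of_le hys.le, Nat.zero_div]
    have := Nat.sub_le y (y / p)
    omega
  rcases hs.lt_or_eq with hsp | rfl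
  · omega
  rcases Nat.eq_zero_or_pos s with rfl | hs0
  · simp
  -- a full block of `p` consecutive integers contains exactly one multiple of `p`
  have hblock : y / s = (y - s) / s + 1 := by
    rw [← Nat.add_div_right _ hs0, Nat.sub_add_cancel hsy]
  omega

section FiniteDifference

variable {R : Type*} [CommRing R] {p : ℕ} {π : R} {F : R[X]} {W : ℕ → R}

theorem sum_choose_succ_mul_eval (hW : ∀ m, W (m + 1) = W m * F.eval (m : R)) (A q : ℕ)
    (U : R[X]) :
    ∑ s ∈ range (A + 2), ((A + 1).choose s : R) * (W (s + q) * U.eval ((s + q : ℕ) : R))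
      = ∑ s ∈ range (A + 1),
          (A.choose s : R) * (W (s + q) * (U + F * taylor 1 U).eval ((s + q : ℕ) : R)) := by
  rw [sum_choose_succ_mul (fun s _ => W (s + q) * U.eval ((s + q : ℕ) : R)) A,
    ← sum_add_distrib]
  refine sum_congr rfl fun s _ => ?_
  rw [show s + 1 + q = s + q + 1 by ring, hW]
  simp only [eval_add, eval_mul, taylor_eval]
  push_cast
  ring

theorem pow_dvd_coeff_add_mul_taylor
    (hF : ∀ k, π ^ min (k + 1) (p - 1) ∣ (F + 1).coeff k) (hFdeg : F.natDegree < p)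
    {t A : ℕ} {U : R[X]} (hU : ∀ k, π ^ (t - nonMultipleCount p (A + 1 - k)) ∣ U.coeff k)
    (k : ℕ) :
    π ^ (t - nonMultipleCount p (A - k)) ∣ (U + F * taylor 1 U).coeff k := by
  have hsplit : U + F * taylor 1 U = (F + 1) * taylor 1 U - (taylor 1 U - U) := by ring
  rw [hsplit, coeff_sub, coeff_sub, coeff_mul]
  refine dvd_sub (dvd_sum fun ⟨j₁, j₂⟩ hj => ?_)
    (dvd_taylor_coeff_sub_coeff 1 fun i hi => ?_)
  · rw [Finset.HasAntidiagonal.mem_antidiagonal] at hj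
    rcases lt_or_ge j₁ p with hj₁ | hj₁
    · have hU' : π ^ (t - nonMultipleCount p (A + 1 - j₂)) ∣ (taylor 1 U).coeff j₂ := by
        refine dvd_taylor_coeff 1 fun i hi => (pow_dvd_pow π ?_).trans (hU i)
        have := nonMultipleCount_mono p (show A + 1 - i ≤ A + 1 - j₂ by omega)
        omega
      have hcount := nonMultipleCount_le_min_add (show j₁ + 1 ≤ p by omega) (A + 1 - j₂)
      rw [show A + 1 - j₂ - (j₁ + 1) = A - k by omega] at hcount
      exact (pow_dvd_pow π (by omega)).trans (pow_add π _ _ ▸ mul_dvd_mul (hF j₁) hU')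
    · have hzero : (F + 1).coeff j₁ = 0 := by
        rw [coeff_add, coeff_one, if_neg (by omega), add_zero]
        exact coeff_eq_zero_of_natDegree_lt (by omega)
      rw [hzero, zero_mul]
      exact dvd_zero _
  · refine (pow_dvd_pow π ?_).trans (hU i)
    have := nonMultipleCount_mono p (show A + 1 - i ≤ A - k by omega)
    omega

theorem pow_dvd_sum_choose_mul_eval
    (hF : ∀ k, π ^ min (k + 1) (p - 1) ∣ (F + 1).coeff k) (hFdeg : F.natDegree < p)
    (hW : ∀ m, W (m + 1) = W m * F.eval (m : R)) (q t A : ℕ) (U : R[X])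
    (hU : ∀ k, π ^ (t - nonMultipleCount p (A - k)) ∣ U.coeff k) :
    π ^ t ∣
      ∑ s ∈ range (A + 1), (A.choose s : R) * (W (s + q) * U.eval ((s + q : ℕ) : R)) := by
  induction A generalizing U with
  | zero =>
    simp only [zero_add, sum_range_one, choose_self, cast_one, one_mul]
    refine dvd_mul_of_dvd_right ?_ _
    rw [eval_eq_sum_range]
    exact dvd_sum fun i _ => by simpa [nonMultipleCount] using (hU i).mul_right _
  | succ A ih =>
    rw [sum_choose_succ_mul_eval hW]
    exact ih _ (pow_dvd_coeff_add_mul_taylor hF hFdeg hU)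

end FiniteDifference

/-- For `t < p`, the integer `j * p + n + 1 + t` is a multiple of `p` exactly when
`t = p - 1 - n % p`. -/
def offsets (p n : ℕ) : Finset ℕ := (range p).erase (p - 1 - n % p)

/-- The product of the integers in `(n, n + m p]` that are not divisible by `p`. -/
def prodNonMultiples (p n m : ℕ) : ℕ :=
  ∏ j ∈ range m, ∏ t ∈ offsets p n, (j * p + n + 1 + t)

noncomputable def offsetPoly (p n : ℕ) : ℤ[X] :=
  ∏ t ∈ offsets p n, (X + C ((n + 1 + t : ℕ) : ℤ))

section Offsets

variable {p : ℕ}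

theorem add_one_add_sub_one_sub_mod (hp : 0 < p) (n : ℕ) :
    n + 1 + (p - 1 - n % p) = (n / p + 1) * p := by
  have := Nat.div_add_mod' n p
  have := Nat.mod_lt n hp
  rw [add_one_mul]
  omega

theorem card_offsets (hp : 0 < p) (n : ℕ) : (offsets p n).card = p - 1 := by
  rw [offsets, card_erase_of_mem (mem_range.2 (by omega)), card_range]

theorem prod_range_eq_mul_prod_offsets (hp : 0 < p) (n j : ℕ) :
    ∏ t ∈ range p, (j * p + n + 1 + t)
      = (j + n / p + 1) * p * ∏ t ∈ offsets p n, (j * p + n + 1 + t) := by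
  rw [offsets, ← mul_prod_erase _ _ (mem_range.2 (by omega : p - 1 - n % p < p))]
  congr 1
  have := add_one_add_sub_one_sub_mod hp n
  rw [add_one_mul, add_mul] at *
  omega

theorem prodNonMultiples_succ (n m : ℕ) :
    prodNonMultiples p n (m + 1)
      = prodNonMultiples p n m * ∏ t ∈ offsets p n, (m * p + n + 1 + t) :=
  prod_range_succ _ _

theorem factorial_mul_factorial_div_eq (hp : 0 < p) (n m : ℕ) :
    (m * p + n)! * (n / p)! = n ! * (m + n / p)! * p ^ m * prodNonMultiples p n m := by
  induction m with
  | zero => simp [prodNonMultiples]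
  | succ m ih =>
    have hblock : ((m + 1) * p + n)!
        = (m * p + n)! * ((m + n / p + 1) * p * ∏ t ∈ offsets p n, (m * p + n + 1 + t)) := by
      rw [← prod_range_eq_mul_prod_offsets hp, ← ascFactorial_eq_prod_range,
        factorial_mul_ascFactorial, add_one_mul, add_right_comm]
    rw [hblock, mul_right_comm, ih, prodNonMultiples_succ,
      show m + 1 + n / p = m + n / p + 1 by ring, factorial_succ, pow_succ]
    ring

theorem factorial_eq (hp : 0 < p) (n m : ℕ) :
    (m * p + n)!
      = n ! * (m + n / p).choose (n / p) * prodNonMultiples p n m * (m ! * p ^ m) := by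
  apply Nat.eq_of_mul_eq_mul_right (factorial_pos (n / p))
  rw [factorial_mul_factorial_div_eq hp, ← add_choose_mul_factorial_mul_factorial m (n / p)]
  ring

theorem prod_offsets_X_add_C [Fact p.Prime] (n : ℕ) :
    ∏ t ∈ offsets p n, (X + C ((n + 1 + t : ℕ) : ZMod p)) = X ^ (p - 1) - 1 := by
  have hp := (Fact.out : p.Prime).pos
  have hzero : ((n + 1 + (p - 1 - n % p) : ℕ) : ZMod p) = 0 := by
    rw [add_one_add_sub_one_sub_mod hp n, cast_mul, ZMod.natCast_self, mul_zero]
  have h := mul_prod_erase (range p) (fun t => X + C ((n + 1 + t : ℕ) : ZMod p))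
    (mem_range.2 (by omega : p - 1 - n % p < p))
  have hneg : ∏ u : ZMod p, (X + C u) = ∏ u : ZMod p, (X - C u) :=
    Fintype.prod_equiv (Equiv.neg _) _ _ fun u => by simp [sub_eq_add_neg]
  rw [hzero, C_0, add_zero, ZMod.prod_range_natCast_add p (n + 1) fun u => X + C u, hneg,
    FiniteField.prod_X_sub_C_eq_X_pow_card_sub_X, ZMod.card] at h
  apply mul_left_cancel₀ (X_ne_zero (R := ZMod p))
  rw [offsets, h, mul_sub, mul_one, mul_pow_sub_one hp.ne']

theorem map_offsetPoly [Fact p.Prime] (n : ℕ) :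
    (offsetPoly p n).map (Int.castRingHom (ZMod p)) = X ^ (p - 1) - 1 := by
  simpa [offsetPoly, Polynomial.map_prod] using prod_offsets_X_add_C (p := p) n

theorem natDegree_offsetPoly_comp_lt (hp : 0 < p) (n : ℕ) :
    ((offsetPoly p n).comp (C (p : ℤ) * X)).natDegree < p := by
  have hdeg : (offsetPoly p n).natDegree = p - 1 := by
    rw [offsetPoly, natDegree_prod_of_monic _ _ fun _ _ => monic_X_add_C _]
    simp only [natDegree_X_add_C, sum_const, card_offsets hp, smul_eq_mul, mul_one]
  calc _ ≤ (offsetPoly p n).natDegree * (C (p : ℤ) * X).natDegree := natDegree_comp_le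
    _ ≤ (p - 1) * 1 := Nat.mul_le_mul hdeg.le ((natDegree_C_mul_le _ _).trans natDegree_X_le)
    _ < p := by omega

theorem pow_dvd_coeff_offsetPoly_comp_add_one (hp : p.Prime) (n k : ℕ) :
    (p : ℤ) ^ min (k + 1) (p - 1) ∣ ((offsetPoly p n).comp (C (p : ℤ) * X) + 1).coeff k := by
  have := Fact.mk hp
  have hp2 := hp.two_le
  have hcoeff :
      ((offsetPoly p n).coeff k : ZMod p) = (X ^ (p - 1) - 1 : (ZMod p)[X]).coeff k := by
    rw [← map_offsetPoly (p := p) n, coeff_map, eq_intCast]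
  rw [coeff_add, coeff_comp_C_mul_X, coeff_one]
  rcases Nat.eq_zero_or_pos k with rfl | hk
  · rw [if_pos rfl, pow_zero, one_mul, show min (0 + 1) (p - 1) = 1 by omega, pow_one,
      ← ZMod.intCast_zmod_eq_zero_iff_dvd]
    push_cast
    rw [hcoeff, coeff_sub, coeff_X_pow, if_neg (by omega), coeff_one_zero]
    ring
  rw [if_neg hk.ne', add_zero]
  rcases lt_or_ge k (p - 1) with hkp | hkp
  · rw [show min (k + 1) (p - 1) = k + 1 by omega, pow_succ]
    refine mul_dvd_mul_left _ ((ZMod.intCast_zmod_eq_zero_iff_dvd _ p).1 ?_)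
    rw [hcoeff, coeff_sub, coeff_X_pow, if_neg hkp.ne, coeff_one, if_neg hk.ne', sub_zero]
  · exact (pow_dvd_pow _ (by omega)).mul_right _

end Offsets

theorem pow_dvd_sum_choose_mul_prodNonMultiples {p : ℕ} (hp : p.Prime) (n A q : ℕ) :
    p ^ nonMultipleCount p A ∣
      ∑ s ∈ range (A + 1), A.choose s * prodNonMultiples p n (s + q) := by
  have hW : ∀ m, (prodNonMultiples p n (m + 1) : ℤ)
      = prodNonMultiples p n m * ((offsetPoly p n).comp (C (p : ℤ) * X)).eval (m : ℤ) := by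
    intro m
    simp only [prodNonMultiples_succ, offsetPoly, eval_comp, eval_prod, eval_add, eval_X, eval_C,
      eval_mul, Nat.cast_mul, Nat.cast_prod]
    congr 1
    exact prod_congr rfl fun t _ => by push_cast; ring
  have hU : ∀ k,
      (p : ℤ) ^ (nonMultipleCount p A - nonMultipleCount p (A - k)) ∣ (1 : ℤ[X]).coeff k := by
    intro k
    rcases Nat.eq_zero_or_pos k with rfl | hk
    · simp
    · rw [coeff_one, if_neg hk.ne']
      exact dvd_zero _
  have h := pow_dvd_sum_choose_mul_eval (W := fun m => (prodNonMultiples p n m : ℤ))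
    (pow_dvd_coeff_offsetPoly_comp_add_one hp n)
    (natDegree_offsetPoly_comp_lt hp.pos n) hW q _ A 1 hU
  simp only [eval_one, mul_one] at h
  exact_mod_cast h

theorem pow_dvd_sum_choose_mul_choose_mul_prodNonMultiples {p : ℕ} (hp : p.Prime)
    (n a q c : ℕ) :
    p ^ nonMultipleCount p (a - c) ∣ ∑ r ∈ range (a + 1),
      a.choose r * ((r + q + c).choose c * prodNonMultiples p n (r + q)) := by
  have hvandermonde (r : ℕ) :
      (r + q + c).choose c = ∑ ij ∈ antidiagonal c, r.choose ij.1 * (q + c).choose ij.2 := by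
    rw [add_assoc, Nat.add_choose_eq]
  simp_rw [hvandermonde, sum_mul, mul_sum]
  rw [sum_comm]
  refine dvd_sum fun ⟨i, j⟩ hij => ?_
  rw [Finset.HasAntidiagonal.mem_antidiagonal] at hij
  have hsum : ∑ r ∈ range (a + 1),
        a.choose r * (r.choose i * (q + c).choose j * prodNonMultiples p n (r + q))
      = (q + c).choose j
          * ∑ r ∈ range (a + 1), a.choose r * r.choose i * prodNonMultiples p n (r + q) := by
    rw [mul_sum]
    exact sum_congr rfl fun r _ => by ring
  rw [hsum, Nat.sum_range_choose_mul_choose_mul]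
  simp_rw [add_assoc _ i q]
  have hmono := pow_dvd_pow p (nonMultipleCount_mono p (show a - c ≤ a - i by omega))
  exact ((hmono.trans (pow_dvd_sum_choose_mul_prodNonMultiples hp n (a - i) (i + q))).mul_left
    _).mul_left _

end FactorialQuotient

open FactorialQuotient in
theorem lemma_3_2_1_general (p : ℕ) (hp : p.Prime) (a q n : ℕ) :
    (∀ r : ℕ, (r + q)! * p ^ (r + q) ∣ ((r + q) * p + n)!) ∧
    p ^ (if a * p ≤ n then padicValNat p (n !)
          else a - n / p + padicValNat p (n !) - (a - n / p) / p)
      ∣ ∑ r ∈ Finset.range (a + 1),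
          a.choose r * (((r + q) * p + n)! / ((r + q)! * p ^ (r + q))) := by
  have hquot (m : ℕ) : (m * p + n)! / (m ! * p ^ m)
      = n ! * ((m + n / p).choose (n / p) * prodNonMultiples p n m) :=
    Nat.div_eq_of_eq_mul_left (Nat.mul_pos (factorial_pos m) (pow_pos hp.pos m))
      (by rw [factorial_eq hp.pos]; ring)
  refine ⟨fun r => Dvd.intro_left _ (factorial_eq hp.pos n (r + q)).symm, ?_⟩
  simp_rw [hquot, mul_left_comm _ (n !), ← mul_sum]
  split_ifs
  · exact pow_padicValNat_dvd.mul_right _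
  · have hexp : a - n / p + padicValNat p n ! - (a - n / p) / p
        = padicValNat p n ! + nonMultipleCount p (a - n / p) := by
      unfold nonMultipleCount
      have := Nat.div_le_self (a - n / p) p
      generalize a - n / p = x at this ⊢
      omega
    rw [hexp, pow_add]
    exact mul_dvd_mul pow_padicValNat_dvd
      (pow_dvd_sum_choose_mul_choose_mul_prodNonMultiples hp n a q (n / p))

/-- Lemma 3.2.1: for an odd prime p and nonnegative integers a, q, n, each
((r+q)p+n)!/((r+q)! p^{r+q}) is an integer and
∑_{r=0}^a C(a,r) ((r+q)p+n)!/((r+q)! p^{r+q}) ≡ 0 mod p^M, where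
M = ord_p(n!) if n ≥ ap, and M = a - ⌊n/p⌋ + ord_p(n!) - ⌊(a-⌊n/p⌋)/p⌋ if n < ap. -/
theorem lemma_3_2_1 (p : ℕ) (hp : p.Prime) (hodd : p ≠ 2) (a q n : ℕ) :
    (∀ r : ℕ, (r + q)! * p ^ (r + q) ∣ ((r + q) * p + n)!) ∧
    p ^ (if a * p ≤ n then padicValNat p (n !)
          else a - n / p + padicValNat p (n !) - (a - n / p) / p)
      ∣ ∑ r ∈ Finset.range (a + 1),
          a.choose r * (((r + q) * p + n)! / ((r + q)! * p ^ (r + q))) :=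
  lemma_3_2_1_general p hp a q n
end

section
/- Let p ≥ 7 be a prime and let U be the partition with U_1 = p, U_{2p−1} = (p−5)/2, and U_j = 0 for all other j. Then w(U) = p + (2p−1)(p−5)/2, d(U) = p + (p−5)/2, and the p-adic valuation of τ_U equals (p−5)/2, which moreover equals ⌊(w(U) + d(U) − 2)/(2p)⌋. In particular the lower bound ord_p(τ_U) ≥ ⌊(w(U)+d(U)−2)/(2p)⌋ is attained with equality for this partition. -/
open Nat MvPolynomial

noncomputable section

/-- weight of a partition given as multiplicity function -/
def pWeight (U : ℕ →₀ ℕ) : ℕ := U.sum fun j m => j * m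

/-- degree of a partition -/
def pDegree (U : ℕ →₀ ℕ) : ℕ := U.sum fun _ m => m

/-- γ_U = ∏_j (j+1)^{U j} (U j)! -/
def pGamma (U : ℕ →₀ ℕ) : ℕ := U.prod fun j m => (j + 1) ^ m * m !

/-- τ_U = (-1)^{d(U)-1} (w(U)+d(U)-2)! / γ_U -/
def pTau (U : ℕ →₀ ℕ) : ℚ :=
  (-1) ^ (pDegree U - 1) * ((pWeight U + pDegree U - 2)! : ℚ) / (pGamma U : ℚ)

/-- Q n = B̂_n / n, the Schur function expression of the universal Bernoulli numbers -/
def Q (n : ℕ) : MvPolynomial ℕ ℚ :=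
  ∑ᶠ U ∈ {U : ℕ →₀ ℕ | U 0 = 0 ∧ pWeight U = n}, monomial U (pTau U)

/-- A polynomial over ℚ is ≡ 0 mod p^M iff every nonzero coefficient has
p-adic valuation at least M. -/
def CongZeroModPpow (p : ℕ) (M : ℕ) (P : MvPolynomial ℕ ℚ) : Prop :=
  ∀ m : ℕ →₀ ℕ, P.coeff m ≠ 0 → (M : ℤ) ≤ padicValRat p (P.coeff m)

/-!
Write p = 2k + 5. Then w(U) + d(U) - 2 = p(2k + 1) + (2k + 3) with both 2k + 1 and 2k + 3 below p,
so Legendre's formula gives ord_p((w(U) + d(U) - 2)!) = 2k + 1, while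
γ_U = 2^p p! (2p)^k k! has ord_p(γ_U) = k + 1.
-/

section TwoPartPartition

variable {a b : ℕ} (m n : ℕ)

lemma pWeight_single_add_single :
    pWeight (Finsupp.single a m + Finsupp.single b n) = a * m + b * n := by
  rw [pWeight, Finsupp.sum_add_index' (fun _ => mul_zero _) (fun _ => mul_add _),
    Finsupp.sum_single_index (mul_zero a), Finsupp.sum_single_index (mul_zero b)]

lemma pDegree_single_add_single :
    pDegree (Finsupp.single a m + Finsupp.single b n) = m + n := by
  rw [pDegree, Finsupp.sum_add_index' (fun _ => rfl) (fun _ _ _ => rfl),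
    Finsupp.sum_single_index rfl, Finsupp.sum_single_index rfl]

lemma pGamma_single_add_single (hab : a ≠ b) :
    pGamma (Finsupp.single a m + Finsupp.single b n) =
      (a + 1) ^ m * m ! * ((b + 1) ^ n * n !) := by
  have hdisj : Disjoint (Finsupp.single a m).support (Finsupp.single b n).support :=
    Finset.disjoint_of_subset_left Finsupp.support_single_subset
      (Finset.disjoint_of_subset_right Finsupp.support_single_subset
        (Finset.disjoint_singleton.2 hab))
  rw [pGamma, Finsupp.prod_add_index_of_disjoint hdisj,
    Finsupp.prod_single_index (by simp), Finsupp.prod_single_index (by simp)]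

end TwoPartPartition

lemma pGamma_ne_zero (U : ℕ →₀ ℕ) : pGamma U ≠ 0 :=
  Finset.prod_ne_zero_iff.2 fun _ _ => by positivity

lemma padicValRat_neg_one_pow_mul (p e : ℕ) (x : ℚ) :
    padicValRat p ((-1 : ℚ) ^ e * x) = padicValRat p x := by
  rcases Nat.even_or_odd e with he | he
  · rw [he.neg_one_pow, one_mul]
  · rw [he.neg_one_pow, neg_one_mul, padicValRat.neg]

lemma padicValRat_pTau (p : ℕ) [Fact p.Prime] (U : ℕ →₀ ℕ) :
    padicValRat p (pTau U) =
      padicValNat p (pWeight U + pDegree U - 2)! - padicValNat p (pGamma U) := by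
  rw [pTau, mul_div_assoc, padicValRat_neg_one_pow_mul,
    padicValRat.div (mod_cast factorial_ne_zero _) (mod_cast pGamma_ne_zero U),
    padicValRat.of_nat, padicValRat.of_nat]

lemma padicValNat_factorial_of_lt {p n : ℕ} [hp : Fact p.Prime] (hn : n < p) :
    padicValNat p n ! = 0 :=
  padicValNat.eq_zero_of_not_dvd fun h => (hp.out.dvd_factorial.1 h).not_gt hn

lemma padicValNat_factorial_mul_add_of_lt {p m r : ℕ} [Fact p.Prime] (hm : m < p) (hr : r < p) :
    padicValNat p (p * m + r)! = m := by
  rw [padicValNat_factorial_mul_add m hr, padicValNat_factorial_mul,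
    padicValNat_factorial_of_lt hm, zero_add]

lemma padicValNat_pGamma_single_one_add_single {p : ℕ} [hp : Fact p.Prime] (hp2 : p ≠ 2) {k : ℕ}
    (hk : k < p) :
    padicValNat p (pGamma (Finsupp.single 1 p + Finsupp.single (2 * p - 1) k)) = k + 1 := by
  have hp1 : 1 < p := hp.out.one_lt
  have h2 : padicValNat p 2 = 0 := padicValNat_primes hp2
  have h2p : padicValNat p (2 * p) = 1 := by
    rw [padicValNat.mul two_ne_zero (by omega), h2, padicValNat_self]
  have hpfact : padicValNat p p ! = 1 := by
    simpa using padicValNat_factorial_mul_add_of_lt (p := p) (m := 1) (r := 0) hp1 (by omega)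
  rw [pGamma_single_add_single _ _ (by omega), show 2 * p - 1 + 1 = 2 * p by omega,
    one_add_one_eq_two, padicValNat.mul (by positivity) (by positivity),
    padicValNat.mul (by positivity) (by positivity),
    padicValNat.mul (by positivity) (by positivity), padicValNat.pow, padicValNat.pow,
    h2, h2p, hpfact, padicValNat_factorial_of_lt hk]
  ring

/-- Remark 3.1.2(2)/3.3.2: for a prime p ≥ 7 and the partition U with U_1 = p,
U_{2p-1} = (p-5)/2 and U_j = 0 otherwise, one has w(U) = p + (2p-1)(p-5)/2,
d(U) = p + (p-5)/2, ord_p(τ_U) = (p-5)/2 = ⌊(w(U)+d(U)-2)/(2p)⌋, so the bound of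
Lemma 3.3.1 is attained with equality. -/
theorem best_possible (p : ℕ) (hp : p.Prime) (h7 : 7 ≤ p)
    (U : ℕ →₀ ℕ) (hU : U = Finsupp.single 1 p + Finsupp.single (2 * p - 1) ((p - 5) / 2)) :
    pWeight U = p + (2 * p - 1) * ((p - 5) / 2) ∧
    pDegree U = p + (p - 5) / 2 ∧
    padicValRat p (pTau U) = ((p - 5) / 2 : ℕ) ∧
    (p - 5) / 2 = (pWeight U + pDegree U - 2) / (2 * p) := by
  have : Fact p.Prime := ⟨hp⟩
  set k := (p - 5) / 2
  have hpk : p = 2 * k + 5 := by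
    have := Nat.odd_iff.1 (hp.odd_of_ne_two (by omega))
    omega
  have hw : pWeight U = p + (2 * p - 1) * k := by
    rw [hU, pWeight_single_add_single, one_mul]
  have hd : pDegree U = p + k := by rw [hU, pDegree_single_add_single]
  have hN : pWeight U + pDegree U - 2 = p * (2 * k + 1) + (2 * k + 3) := by
    rw [hw, hd, show 2 * p - 1 = 4 * k + 9 by omega, hpk]
    ring_nf
    omega
  refine ⟨hw, hd, ?_, ?_⟩
  · rw [padicValRat_pTau, hN, padicValNat_factorial_mul_add_of_lt (by omega) (by omega), hU,
      padicValNat_pGamma_single_one_add_single (by omega) (by omega)]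
    push_cast
    ring
  · rw [hN, show p * (2 * k + 1) + (2 * k + 3) = 2 * p * k + (4 * k + 8) by rw [hpk]; ring,
      Nat.mul_add_div (by omega), Nat.div_eq_of_lt (by omega), add_zero]
end
end

section
/- Let R = ℚ[c_1, c_2, c_3, …] and let u(T) = T + Σ_{n≥1} c_n · T^{n+1}/(n+1) in R⟦T⟧. Suppose t ∈ R⟦T⟧ has constant coefficient 0 and coefficient of T equal to 1, and satisfies u(t(T)) = T (substitution of power series), so t is the compositional inverse of u. Write t = T·h where h ∈ R⟦T⟧ has constant coefficient 1, so that T/t(T) = h⁻¹ (multiplicative inverse). Then for every n ≥ 1, n! times the coefficient of T^n in h⁻¹ equals n · Q_n; equivalently, the universal Bernoulli numbers B̂_n defined by u/t(u) = Σ_{n≥0} B̂_n u^n/n! satisfy B̂_n/n = Σ_{U : w(U)=n} τ_U · c^U. -/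
open Nat MvPolynomial

noncomputable section

/-! Write `t = T·h`. Then `u(t) = T` says `h + ∑ₙ cₙ/(n+1) Tⁿ hⁿ⁺¹ = 1`, so for every series `p`
`[Tᵐ] p = [Tᵐ] (h p) + ∑_{1 ≤ n ≤ m} cₙ/(n+1) [Tᵐ⁻ⁿ] (hⁿ⁺¹ p)`.
Taking `p = hᵏ`, induction on `m` and then on `k ≥ 0` shows that the coefficient of `c^U Tᵐ` in `hᵏ`
is the Lagrange-inversion value `(-1)^d k (w+k+1)(w+k+2)⋯(w+k+d-1) / γ_U` (for `U ≠ 0`, with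
`d = d(U)`, `w = w(U) = m`), because these numbers satisfy the same recursion. Taking `p = h⁻¹`
extends the formula to `k = -1`, where it equals `n τ_U / n!`. -/

section Partitions

variable (U V : ℕ →₀ ℕ) (n : ℕ)

@[simp] theorem pWeight_zero : pWeight 0 = 0 := by simp [pWeight]
@[simp] theorem pDegree_zero : pDegree 0 = 0 := by simp [pDegree]
@[simp] theorem pGamma_zero : pGamma 0 = 1 := by simp [pGamma]
@[simp] theorem pWeight_single : pWeight (Finsupp.single n 1) = n := by simp [pWeight]
@[simp] theorem pDegree_single : pDegree (Finsupp.single n 1) = 1 := by simp [pDegree]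

theorem pWeight_add : pWeight (U + V) = pWeight U + pWeight V :=
  Finsupp.sum_add_index' (fun _ => mul_zero _) fun _ _ _ => mul_add _ _ _

theorem pDegree_add : pDegree (U + V) = pDegree U + pDegree V := map_add Finsupp.degree U V

theorem pDegree_eq_zero_iff : pDegree U = 0 ↔ U = 0 := Finsupp.degree_eq_zero_iff U

theorem pGamma_add_single : pGamma (V + Finsupp.single n 1) = pGamma V * ((n + 1) * (V n + 1)) := by
  set γ : ℕ → ℕ → ℕ := fun j m => ((j + 1) ^ m * m !)
  have hg : ∀ j, γ j 0 = 1 := by simp [γ]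
  have herase : (V + Finsupp.single n 1).erase n = V.erase n := by
    ext j; by_cases hj : j = n <;> simp [hj]
  rw [pGamma, pGamma, ← Finsupp.mul_prod_erase' _ n γ hg, ← Finsupp.mul_prod_erase' V n γ hg,
    herase]
  simp [γ, pow_succ, Nat.factorial_succ]
  ring

theorem pGamma_pos : 0 < pGamma U :=
  Finset.prod_pos fun _ _ => by positivity

theorem mul_apply_le_pWeight (j : ℕ) : j * U j ≤ pWeight U := by
  by_cases hj : j ∈ U.support
  · exact Finset.single_le_sum (f := fun j => j * U j) (fun _ _ => Nat.zero_le _) hj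
  · simp [Finsupp.notMem_support_iff.mp hj]

theorem sub_single_one_add {U : ℕ →₀ ℕ} {n : ℕ} (hn : n ∈ U.support) :
    U - Finsupp.single n 1 + Finsupp.single n 1 = U :=
  tsub_add_cancel_of_le <| Finsupp.single_le_iff.mpr <|
    Nat.one_le_iff_ne_zero.mpr (Finsupp.mem_support_iff.mp hn)

theorem apply_le_pWeight {U : ℕ →₀ ℕ} (hU0 : U 0 = 0) (j : ℕ) : U j ≤ pWeight U := by
  rcases Nat.eq_zero_or_pos j with rfl | hj
  · simp [hU0]
  · exact (Nat.le_mul_of_pos_left _ hj).trans (mul_apply_le_pWeight U j)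

theorem support_subset_Icc {U : ℕ →₀ ℕ} (hU0 : U 0 = 0) : U.support ⊆ Finset.Icc 1 (pWeight U) := by
  intro j hj
  have hUj := Finsupp.mem_support_iff.mp hj
  have hj0 : j ≠ 0 := by rintro rfl; exact hUj hU0
  exact Finset.mem_Icc.mpr ⟨Nat.one_le_iff_ne_zero.mpr hj0,
    (Nat.le_mul_of_pos_right _ (Nat.pos_of_ne_zero hUj)).trans (mul_apply_le_pWeight U j)⟩

theorem partition_sub_single_one_iff {U : ℕ →₀ ℕ} {n m : ℕ} (hn : n ∈ U.support) (h1 : 1 ≤ n)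
    (hnm : n ≤ m) :
    ((U - Finsupp.single n 1 : ℕ →₀ ℕ) 0 = 0 ∧ pWeight (U - Finsupp.single n 1) = m - n) ↔
      (U 0 = 0 ∧ pWeight U = m) := by
  obtain ⟨V, rfl⟩ : ∃ V, U = V + Finsupp.single n 1 := ⟨_, (sub_single_one_add hn).symm⟩
  rw [add_tsub_cancel_right, pWeight_add, pWeight_single, Finsupp.add_apply,
    Finsupp.single_eq_of_ne (by omega)]
  omega

theorem finite_setOf_partition (m : ℕ) : {U : ℕ →₀ ℕ | U 0 = 0 ∧ pWeight U = m}.Finite := by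
  refine ((Finset.Icc 1 m).finsupp fun _ => Finset.range (m + 1)).finite_toSet.subset ?_
  rintro U ⟨hU0, rfl⟩
  rw [Finset.mem_coe, Finset.mem_finsupp_iff]
  exact ⟨support_subset_Icc hU0, fun j _ => Finset.mem_range_succ_iff.mpr (apply_le_pWeight hU0 j)⟩

end Partitions

section LagrangeCoeff

/-- `γ_U · lagrangeCoeff k U`, as a function of `d(U)`, `w(U) + k` and `k`; the middle argument is
unchanged by the step `(U, k) ↦ (U - eₙ, k + n)` of the recursion. -/
def lagrangeNum : ℕ → ℚ → ℚ → ℚ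
  | 0, _, _ => 1
  | e + 1, s, k => (-1) ^ (e + 1) * k * (ascPochhammer ℚ e).eval (s + 1)

def lagrangeCoeff (k : ℚ) (U : ℕ →₀ ℕ) : ℚ :=
  lagrangeNum (pDegree U) (pWeight U + k) k / pGamma U

def lagrangeCoeffOfWeight (m : ℕ) (k : ℚ) (U : ℕ →₀ ℕ) : ℚ :=
  if U 0 = 0 ∧ pWeight U = m then lagrangeCoeff k U else 0

theorem lagrangeCoeff_zero_left (U : ℕ →₀ ℕ) : lagrangeCoeff 0 U = if U = 0 then 1 else 0 := by
  by_cases hU : U = 0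
  · simp [hU, lagrangeCoeff, lagrangeNum]
  · obtain ⟨e, he⟩ := Nat.exists_eq_succ_of_ne_zero ((pDegree_eq_zero_iff U).not.mpr hU)
    simp [hU, lagrangeCoeff, lagrangeNum, he]

theorem inv_mul_lagrangeCoeff_sub_single {U : ℕ →₀ ℕ} {n : ℕ} (hn : n ∈ U.support) (k : ℚ) :
    (n + 1 : ℚ)⁻¹ * lagrangeCoeff (k + n) (U - Finsupp.single n 1) =
      U n * lagrangeNum (pDegree U - 1) (pWeight U + k) (k + n) / pGamma U := by
  obtain ⟨V, rfl⟩ : ∃ V, U = V + Finsupp.single n 1 := ⟨_, (sub_single_one_add hn).symm⟩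
  have := pGamma_pos V
  rw [add_tsub_cancel_right, pDegree_add, pWeight_add, pGamma_add_single, lagrangeCoeff]
  simp only [pDegree_single, pWeight_single, Nat.add_sub_cancel, Finsupp.add_apply,
    Finsupp.single_eq_same]
  push_cast
  rw [show (pWeight V : ℚ) + n + k = pWeight V + (k + n) by ring]
  field_simp

theorem lagrangeCoeff_sub_one (k : ℚ) (U : ℕ →₀ ℕ) :
    lagrangeCoeff (k - 1) U = lagrangeCoeff k U +
      ∑ n ∈ U.support, (n + 1 : ℚ)⁻¹ * lagrangeCoeff (k + n) (U - Finsupp.single n 1) := by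
  have hγ : (pGamma U : ℚ) ≠ 0 := by have := pGamma_pos U; positivity
  have hd : ∑ n ∈ U.support, (U n : ℚ) = pDegree U := by simp [pDegree, Finsupp.sum]
  have hw : ∑ n ∈ U.support, (n * U n : ℚ) = pWeight U := by simp [pWeight, Finsupp.sum]
  rw [Finset.sum_congr rfl fun n hn => inv_mul_lagrangeCoeff_sub_single hn k, ← Finset.sum_div,
    lagrangeCoeff, lagrangeCoeff, ← add_div, div_left_inj' hγ]
  generalize pDegree U = d at hd ⊢
  rcases d with _ | _ | e
  · simp_all [lagrangeNum]
  · simp_all [lagrangeNum]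
    ring
  · set A := (ascPochhammer ℚ e).eval (pWeight U + k + 1)
    have hsum : ∑ n ∈ U.support, (U n : ℚ) * lagrangeNum (e + 1) (pWeight U + k) (k + n) =
        (-1) ^ (e + 1) * A * (k * (e + 2) + pWeight U) := by
      calc _ = ∑ n ∈ U.support, (-1) ^ (e + 1) * A * (k * U n + n * U n) :=
            Finset.sum_congr rfl fun n _ => by simp only [lagrangeNum, A]; ring
        _ = (-1) ^ (e + 1) * A *
              (k * ∑ n ∈ U.support, (U n : ℚ) + ∑ n ∈ U.support, (n * U n : ℚ)) := by
            rw [← Finset.mul_sum, Finset.sum_add_distrib, Finset.mul_sum]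
        _ = _ := by rw [hd, hw]; push_cast; ring
    have hleft :
        (ascPochhammer ℚ (e + 1)).eval (pWeight U + (k - 1) + 1) = (pWeight U + k) * A := by
      rw [ascPochhammer_succ_left]; simp [A]; ring_nf
    have hright :
        (ascPochhammer ℚ (e + 1)).eval (pWeight U + k + 1) = A * (pWeight U + k + 1 + e) :=
      ascPochhammer_succ_eval _ _
    rw [Nat.add_sub_cancel, hsum]
    simp only [lagrangeNum, hleft, hright]
    ring

theorem lagrangeCoeffOfWeight_sub_one (m : ℕ) (k : ℚ) (U : ℕ →₀ ℕ) :
    lagrangeCoeffOfWeight m (k - 1) U = lagrangeCoeffOfWeight m k U +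
      ∑ n ∈ Finset.Icc 1 m, (n + 1 : ℚ)⁻¹ *
        if n ∈ U.support then lagrangeCoeffOfWeight (m - n) (k + n) (U - Finsupp.single n 1)
        else 0 := by
  simp only [lagrangeCoeffOfWeight]
  by_cases hU : U 0 = 0 ∧ pWeight U = m
  · have hsupp : U.support ⊆ Finset.Icc 1 m := hU.2 ▸ support_subset_Icc hU.1
    rw [if_pos hU, if_pos hU, lagrangeCoeff_sub_one, ← Finset.sum_subset hsupp]
    · congr 1
      refine Finset.sum_congr rfl fun n hn => ?_
      have ⟨h1, hnm⟩ := Finset.mem_Icc.mp (hsupp hn)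
      rw [if_pos hn, if_pos ((partition_sub_single_one_iff hn h1 hnm).mpr hU)]
    · intro n _ hn
      rw [if_neg hn, mul_zero]
  · rw [if_neg hU, if_neg hU, zero_add, eq_comm]
    refine Finset.sum_eq_zero fun n hn => ?_
    have ⟨h1, hnm⟩ := Finset.mem_Icc.mp hn
    split_ifs with hs hV
    · exact absurd ((partition_sub_single_one_iff hs h1 hnm).mp hV) hU
    all_goals simp

end LagrangeCoeff

namespace PowerSeries

variable {R : Type*} [CommRing R]

theorem coeff_sum_Icc_C_mul_X_pow_mul (a : ℕ → R) (q : ℕ → R⟦X⟧) {m M : ℕ} (hmM : m ≤ M) :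
    coeff m (∑ n ∈ Finset.Icc 1 M, C (a n) * X ^ n * q n) =
      ∑ n ∈ Finset.Icc 1 m, a n * coeff (m - n) (q n) := by
  simp only [map_sum, mul_assoc, coeff_C_mul, coeff_X_pow_mul', mul_ite, mul_zero]
  rw [← Finset.sum_filter]
  congr 1
  ext n
  simp only [Finset.mem_filter, Finset.mem_Icc]
  omega

theorem coeff_eq_coeff_mul_add_sum (a : ℕ → R) {t h : R⟦X⟧}
    (hcomp : ∀ k, coeff k (t + ∑ n ∈ Finset.Icc 1 k, C (a n) * t ^ (n + 1)) = coeff k X)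
    (hth : t = X * h) (p : R⟦X⟧) (m : ℕ) :
    coeff m p = coeff m (h * p) + ∑ n ∈ Finset.Icc 1 m, a n * coeff (m - n) (h ^ (n + 1) * p) := by
  set F := h + ∑ n ∈ Finset.Icc 1 m, C (a n) * X ^ n * h ^ (n + 1)
  have hF : ∀ k ≤ m, coeff k F = coeff k 1 := by
    intro k hk
    have hk' := hcomp (k + 1)
    have hexp : t + ∑ n ∈ Finset.Icc 1 (k + 1), C (a n) * t ^ (n + 1) =
        X * (h + ∑ n ∈ Finset.Icc 1 (k + 1), C (a n) * X ^ n * h ^ (n + 1)) := by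
      simp only [hth, mul_add, Finset.mul_sum, mul_pow, pow_succ]
      congr 1
      exact Finset.sum_congr rfl fun n _ => by ring
    rw [hexp, coeff_succ_X_mul, map_add, coeff_sum_Icc_C_mul_X_pow_mul _ _ (Nat.le_succ k)] at hk'
    rw [map_add, coeff_sum_Icc_C_mul_X_pow_mul _ _ hk, hk', coeff_X, coeff_one]
    simp
  obtain ⟨r, hr⟩ : X ^ (m + 1) ∣ F - 1 :=
    X_pow_dvd_iff.mpr fun k hk => by rw [map_sub, hF k (by omega), sub_self]
  have hmul : coeff m ((F - 1) * p) = 0 := by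
    rw [hr, mul_assoc, coeff_X_pow_mul', if_neg (by omega)]
  rw [sub_mul, one_mul, map_sub, sub_eq_zero, add_mul, map_add, Finset.sum_mul] at hmul
  rw [← hmul, add_right_inj, ← coeff_sum_Icc_C_mul_X_pow_mul a (fun n => h ^ (n + 1) * p) le_rfl]
  simp only [mul_assoc]

end PowerSeries

theorem factorial_mul_lagrangeCoeff_neg_one {U : ℕ →₀ ℕ} {n : ℕ} (hn : n ≠ 0)
    (hw : pWeight U = n) : (n ! : ℚ) * lagrangeCoeff (-1) U = n * pTau U := by
  obtain ⟨j, rfl⟩ : ∃ j, n = j + 1 := ⟨n - 1, by omega⟩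
  have hU : U ≠ 0 := by rintro rfl; simp at hw
  obtain ⟨e, he⟩ : ∃ e, pDegree U = e + 1 :=
    ⟨pDegree U - 1, by have := (pDegree_eq_zero_iff U).not.mpr hU; omega⟩
  have hfact : (j ! : ℚ) * (ascPochhammer ℚ e).eval ((j + 1 : ℕ) : ℚ) = (j + e)! := by
    rw [ascPochhammer_nat_eq_natCast_ascFactorial]
    exact_mod_cast Nat.factorial_mul_ascFactorial j e
  rw [lagrangeCoeff, pTau, he, hw, lagrangeNum, show j + 1 + (e + 1) - 2 = j + e by omega,
    Nat.add_sub_cancel, Nat.factorial_succ]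
  push_cast at hfact ⊢
  rw [show (j : ℚ) + 1 + -1 + 1 = j + 1 by ring, ← hfact]
  ring

theorem coeff_Q (n : ℕ) (V : ℕ →₀ ℕ) :
    (Q n).coeff V = if V 0 = 0 ∧ pWeight V = n then pTau V else 0 := by
  rw [Q, finsum_mem_eq_finite_toFinset_sum _ (finite_setOf_partition n), MvPolynomial.coeff_sum]
  simp [MvPolynomial.coeff_monomial]

theorem coeff_coeff_one (m : ℕ) (U : ℕ →₀ ℕ) :
    (PowerSeries.coeff m (1 : PowerSeries (MvPolynomial ℕ ℚ))).coeff U =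
      lagrangeCoeffOfWeight m 0 U := by
  rw [PowerSeries.coeff_one, lagrangeCoeffOfWeight, lagrangeCoeff_zero_left]
  by_cases hU : U = 0
  · subst hU
    by_cases hm : m = 0 <;> simp [hm, eq_comm]
  · split_ifs <;> simp [MvPolynomial.coeff_one, Ne.symm hU]

section SchurExpression

variable {t h : PowerSeries (MvPolynomial ℕ ℚ)}
  (hcomp : ∀ k : ℕ,
    PowerSeries.coeff k
      (t + ∑ n ∈ Finset.Icc 1 k,
        PowerSeries.C (MvPolynomial.C (((n : ℚ) + 1)⁻¹) * MvPolynomial.X n) * t ^ (n + 1)) =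
    PowerSeries.coeff k (PowerSeries.X : PowerSeries (MvPolynomial ℕ ℚ)))
  (hth : t = PowerSeries.X * h)
include hcomp hth

theorem coeff_coeff_sub_lagrangeCoeffOfWeight (p : PowerSeries (MvPolynomial ℕ ℚ)) (m : ℕ) (k : ℚ)
    (hpow : ∀ n ∈ Finset.Icc 1 m, ∀ V, (PowerSeries.coeff (m - n) (h ^ (n + 1) * p)).coeff V =
      lagrangeCoeffOfWeight (m - n) (k + n) V) (U : ℕ →₀ ℕ) :
    (PowerSeries.coeff m p).coeff U - lagrangeCoeffOfWeight m (k - 1) U =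
      (PowerSeries.coeff m (h * p)).coeff U - lagrangeCoeffOfWeight m k U := by
  have hsum : ∀ n ∈ Finset.Icc 1 m,
      (MvPolynomial.C (((n : ℚ) + 1)⁻¹) * MvPolynomial.X n *
        PowerSeries.coeff (m - n) (h ^ (n + 1) * p)).coeff U =
      (n + 1 : ℚ)⁻¹ * if n ∈ U.support then
        lagrangeCoeffOfWeight (m - n) (k + n) (U - Finsupp.single n 1) else 0 := by
    intro n hn
    rw [mul_assoc, MvPolynomial.coeff_C_mul, MvPolynomial.coeff_X_mul', hpow n hn]
  rw [PowerSeries.coeff_eq_coeff_mul_add_sum _ hcomp hth p m, lagrangeCoeffOfWeight_sub_one,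
    MvPolynomial.coeff_add, MvPolynomial.coeff_sum, Finset.sum_congr rfl hsum]
  ring

theorem coeff_coeff_pow (m k : ℕ) (U : ℕ →₀ ℕ) :
    (PowerSeries.coeff m (h ^ k)).coeff U = lagrangeCoeffOfWeight m k U := by
  induction m using Nat.strong_induction_on generalizing k U with
  | _ m ihm =>
  induction k generalizing U with
  | zero => simpa using coeff_coeff_one m U
  | succ k ihk =>
    have hpow : ∀ n ∈ Finset.Icc 1 m, ∀ V,
        (PowerSeries.coeff (m - n) (h ^ (n + 1) * h ^ k)).coeff V =
          lagrangeCoeffOfWeight (m - n) ((k + 1 : ℕ) + n) V := by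
      intro n hn V
      rw [← pow_add, ihm (m - n) (by grind)]
      push_cast
      ring_nf
    have := coeff_coeff_sub_lagrangeCoeffOfWeight hcomp hth (h ^ k) m _ hpow U
    rw [ihk, ← pow_succ' h k, show ((k + 1 : ℕ) : ℚ) - 1 = k by push_cast; ring, sub_self] at this
    exact sub_eq_zero.mp this.symm

theorem coeff_coeff_of_mul_eq_one {g : PowerSeries (MvPolynomial ℕ ℚ)} (hg : h * g = 1) (m : ℕ)
    (U : ℕ →₀ ℕ) : (PowerSeries.coeff m g).coeff U = lagrangeCoeffOfWeight m (-1) U := by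
  have hpow : ∀ n ∈ Finset.Icc 1 m, ∀ V, (PowerSeries.coeff (m - n) (h ^ (n + 1) * g)).coeff V =
      lagrangeCoeffOfWeight (m - n) (0 + n) V := by
    intro n _ V
    rw [pow_succ, mul_assoc, hg, mul_one, zero_add, coeff_coeff_pow hcomp hth]
  have := coeff_coeff_sub_lagrangeCoeffOfWeight hcomp hth g m 0 hpow U
  rwa [hg, coeff_coeff_one, sub_self, zero_sub, sub_eq_zero] at this

end SchurExpression

open PowerSeries in
theorem schur_expression_general (t h g : PowerSeries (MvPolynomial ℕ ℚ))
    (hcomp : ∀ k : ℕ,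
      coeff k
        (t + ∑ n ∈ Finset.Icc 1 k,
          PowerSeries.C (MvPolynomial.C (((n : ℚ) + 1)⁻¹) * MvPolynomial.X n) * t ^ (n + 1))
      = coeff k (PowerSeries.X : PowerSeries (MvPolynomial ℕ ℚ)))
    (hth : t = PowerSeries.X * h) (hg : h * g = 1) :
    ∀ n : ℕ, 1 ≤ n →
      (n ! : MvPolynomial ℕ ℚ) * coeff n g = (n : MvPolynomial ℕ ℚ) * Q n := by
  intro n hn
  ext U
  rw [← map_natCast MvPolynomial.C, ← map_natCast MvPolynomial.C, MvPolynomial.coeff_C_mul,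
    MvPolynomial.coeff_C_mul, coeff_coeff_of_mul_eq_one hcomp hth hg, coeff_Q,
    lagrangeCoeffOfWeight]
  split_ifs with hU
  · exact factorial_mul_lagrangeCoeff_neg_one (by omega) hU.2
  · simp

open PowerSeries in
/-- Proposition 2.2.6 (Schur function expression of the universal Bernoulli numbers):
if t(T) is the compositional inverse of u(T) = T + ∑_{n≥1} c_n T^{n+1}/(n+1)
(the hypothesis `hcomp` states u(t(T)) = T coefficientwise: the coefficient of T^k only
involves the terms with n ≤ k since t has order ≥ 1), and T/t(T) = h⁻¹ with
t = T·h and h·g = 1, then n!·[T^n](h⁻¹) = n·Q_n, i.e. B̂_n/n = ∑_{w(U)=n} τ_U c^U. -/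
theorem schur_expression (t h g : PowerSeries (MvPolynomial ℕ ℚ))
    (ht0 : constantCoeff t = 0) (ht1 : coeff 1 t = 1)
    (hcomp : ∀ k : ℕ,
      coeff k
        (t + ∑ n ∈ Finset.Icc 1 k,
          PowerSeries.C (MvPolynomial.C (((n : ℚ) + 1)⁻¹) * MvPolynomial.X n) * t ^ (n + 1))
      = coeff k (PowerSeries.X : PowerSeries (MvPolynomial ℕ ℚ)))
    (hh : constantCoeff h = 1) (hth : t = PowerSeries.X * h) (hg : h * g = 1) :
    ∀ n : ℕ, 1 ≤ n →
      (n ! : MvPolynomial ℕ ℚ) * coeff n g = (n : MvPolynomial ℕ ℚ) * Q n :=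
  schur_expression_general t h g hcomp hth hg
end
end
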